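/- For all words u, v, z over Σ: u ++ v ∼ z if and only if u ∼⊲ z ⊳∼ v. -/

import Mathlib

open RegularExpression
open scoped Classical

universe u

variable {α : Type u}

/-- Two words are independent if every letter of the first is independent
of every letter of the second. -/
def WIndep (I : α → α → Prop) (u v : List α) : Prop :=
  ∀ a ∈ u, ∀ b ∈ v, I a b

/-- Trace equivalence: the least equivalence relation on words containing
all pairs (x ++ [a,b] ++ y, x ++ [b,a] ++ y) with a I b. -/
inductive TrEq (I : α → α → Prop) : List α → List α → Prop
  | swap (x y : List α) {a b : α} : I a b → TrEq I (x ++ [a, b] ++ y) (x ++ [b, a] ++ y)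
  | refl (u : List α) : TrEq I u u
  | symm {u v : List α} : TrEq I u v → TrEq I v u
  | trans {u v w : List α} : TrEq I u v → TrEq I v w → TrEq I u w

/-- Trace closure of a language. -/
def TrClosure (I : α → α → Prop) (L : Set (List α)) : Set (List α) :=
  {w | ∃ z ∈ L, TrEq I w z}

/-- u ⊲ z ⊳ v with exactly n blocks of u: there are nonempty words u₁,…,uₙ and
words v₀,…,vₙ (with v₁,…,v_{n-1} nonempty) such that u = u₁⋯uₙ, v = v₀⋯vₙ,
z = v₀u₁v₁⋯uₙvₙ and vⱼ I uᵢ whenever j < i. -/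
def ScatN (I : α → α → Prop) (n : ℕ) (u z v : List α) : Prop :=
  ∃ us vs : ℕ → List α,
    (∀ i, 1 ≤ i → i ≤ n → us i ≠ []) ∧
    (∀ j, 1 ≤ j → j ≤ n - 1 → vs j ≠ []) ∧
    u = ((List.range n).map (fun i => us (i + 1))).flatten ∧
    v = ((List.range (n + 1)).map vs).flatten ∧
    z = vs 0 ++ ((List.range n).map (fun i => us (i + 1) ++ vs (i + 1))).flatten ∧
    (∀ i j, 1 ≤ i → i ≤ n → j < i → WIndep I (vs j) (us i))

/-- u ⊲ z ⊳ v -/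
def Scat (I : α → α → Prop) (u z v : List α) : Prop :=
  ∃ n, ScatN I n u z v

/-- u ∼⊲ z ⊳ v -/
def EqScat (I : α → α → Prop) (u z v : List α) : Prop :=
  ∃ u', TrEq I u u' ∧ Scat I u' z v

/-- u ∼⊲ z ⊳∼ v -/
def EqScatEq (I : α → α → Prop) (u z v : List α) : Prop :=
  ∃ u' v', TrEq I u u' ∧ Scat I u' z v' ∧ TrEq I v' v

/-- u ∼⊲_N z ⊳∼ v : as EqScatEq, with the number of blocks bounded by N -/
def EqScatEqLe (I : α → α → Prop) (N : ℕ) (u z v : List α) : Prop :=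
  ∃ u' v', TrEq I u u' ∧ (∃ n ≤ N, ScatN I n u' z v') ∧ TrEq I v' v

/-- Reordering concatenation of words. -/
def rconc (I : α → α → Prop) : List α → List α → Set (List α)
  | [], v => {v}
  | a :: u, [] => {a :: u}
  | a :: u, b :: v =>
      (List.cons a) '' rconc I u (b :: v) ∪
      {z | WIndep I (a :: u) [b] ∧ ∃ w ∈ rconc I (a :: u) v, z = b :: w}
termination_by u v => u.length + v.length

/-- Reordering concatenation lifted to languages. -/
def rconcL (I : α → α → Prop) (L L' : Set (List α)) : Set (List α) :=
  {z | ∃ u ∈ L, ∃ v ∈ L', z ∈ rconc I u v}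

/-- The reorderable part of a language w.r.t. a word. -/
def RPart (I : α → α → Prop) (u : List α) (L : Set (List α)) : Set (List α) :=
  {v ∈ L | WIndep I v u}

/-- The reordering derivative of a language along a word. -/
def RDeriv (I : α → α → Prop) (u : List α) (L : Set (List α)) : Set (List α) :=
  {v | ∃ z ∈ L, EqScat I u z v}

/-- Syntactic reorderable part of a regexp w.r.t. a letter. -/
noncomputable def Rexp (I : α → α → Prop) (a : α) : RegularExpression α → RegularExpression α
  | zero => zero
  | epsilon => epsilon
  | char b => if I a b then char b else zero
  | plus E F => plus (Rexp I a E) (Rexp I a F)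
  | comp E F => comp (Rexp I a E) (Rexp I a F)
  | RegularExpression.star E => star (Rexp I a E)

/-- Brzozowski reordering derivative of a regexp along a letter. -/
noncomputable def Dexp (I : α → α → Prop) (a : α) : RegularExpression α → RegularExpression α
  | zero => zero
  | epsilon => zero
  | char b => if a = b then epsilon else zero
  | plus E F => plus (Dexp I a E) (Dexp I a F)
  | comp E F => plus (comp (Dexp I a E) F) (comp (Rexp I a E) (Dexp I a F))
  | RegularExpression.star E => comp (star (Rexp I a E)) (comp (Dexp I a E) (star E))

/-- Syntactic reorderable part along a word. -/
noncomputable def RexpW (I : α → α → Prop) (u : List α) (E : RegularExpression α) :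
    RegularExpression α :=
  u.foldl (fun E a => Rexp I a E) E

/-- Brzozowski reordering derivative along a word. -/
noncomputable def DexpW (I : α → α → Prop) (u : List α) (E : RegularExpression α) :
    RegularExpression α :=
  u.foldl (fun E a => Dexp I a E) E

/-- Antimirov reordering parts-of-derivatives along a letter. -/
inductive Antim (I : α → α → Prop) : RegularExpression α → α → RegularExpression α → Prop
  | chr (a : α) : Antim I (char a) a epsilon
  | plusL {E F : RegularExpression α} {a E'} : Antim I E a E' → Antim I (plus E F) a E'
  | plusR {E F : RegularExpression α} {a F'} : Antim I F a F' → Antim I (plus E F) a F'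
  | compL {E F : RegularExpression α} {a E'} : Antim I E a E' → Antim I (comp E F) a (comp E' F)
  | compR {E F : RegularExpression α} {a F'} :
      Antim I F a F' → Antim I (comp E F) a (comp (Rexp I a E) F')
  | st {E : RegularExpression α} {a E'} :
      Antim I E a E' → Antim I (star E) a (comp (star (Rexp I a E)) (comp E' (star E)))

/-- Antimirov reordering parts-of-derivatives along a word. -/
inductive AntimW (I : α → α → Prop) : RegularExpression α → List α → RegularExpression α → Prop
  | nil (E : RegularExpression α) : AntimW I E [] E
  | snoc {E : RegularExpression α} {u E' a E''} :
      AntimW I E u E' → Antim I E' a E'' → AntimW I E (u ++ [a]) E''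

/-- The dependence graph of a word: vertices are positions; distinct positions
are adjacent when their letters are not independent. -/
def depGraph (I : α → α → Prop) (w : List α) : SimpleGraph (Fin w.length) where
  Adj i j := i ≠ j ∧ ¬(I (w.get i) (w.get j) ∧ I (w.get j) (w.get i))
  symm := by
    constructor
    intro i j h
    exact ⟨h.1.symm, fun hc => h.2 ⟨hc.2, hc.1⟩⟩
  loopless := by
    constructor
    intro i h
    exact h.1 rfl

/-- A word is connected if its dependence graph is connected. -/
def WordConnected (I : α → α → Prop) (w : List α) : Prop :=
  (depGraph I w).Preconnected

/-- Least fixed point star for the trace-closing semantics. -/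
def starI (I : α → α → Prop) (L : Set (List α)) : Set (List α) :=
  sInf {X | {([] : List α)} ∪ rconcL I L X ⊆ X}

/-- Trace-closing semantics of regular expressions. -/
def langI (I : α → α → Prop) : RegularExpression α → Set (List α)
  | zero => ∅
  | epsilon => {[]}
  | char a => {[a]}
  | plus E F => langI I E ∪ langI I F
  | comp E F => rconcL I (langI I E) (langI I F)
  | RegularExpression.star E => starI I (langI I E)

/-- L has (scattering) rank at most N. -/
def HasRankLe (I : α → α → Prop) (L : Set (List α)) (N : ℕ) : Prop :=
  ∀ u v, u ++ v ∈ TrClosure I L → ∃ z ∈ L, EqScatEqLe I N u z v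

/-- L has uniform (scattering) rank at most N. -/
def HasUniformRankLe (I : α → α → Prop) (L : Set (List α)) (N : ℕ) : Prop :=
  ∀ w ∈ TrClosure I L, ∃ z ∈ L, ∀ u v, w = u ++ v → EqScatEqLe I N u z v

/-- Star-connected regular expressions. -/
inductive StarConnected (I : α → α → Prop) : RegularExpression α → Prop
  | zero : StarConnected I zero
  | epsilon : StarConnected I epsilon
  | chr (a : α) : StarConnected I (char a)
  | plus {E F : RegularExpression α} :
      StarConnected I E → StarConnected I F → StarConnected I (plus E F)
  | comp {E F : RegularExpression α} :
      StarConnected I E → StarConnected I F → StarConnected I (comp E F)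
  | st {E : RegularExpression α} :
      StarConnected I E → (∀ w ∈ E.matches', WordConnected I w) → StarConnected I (star E)

/-- Refined Antimirov reordering parts-of-derivatives along a letter. -/
inductive RAntim (I : α → α → Prop) :
    RegularExpression α → α → RegularExpression α → RegularExpression α → Prop
  | chr (a : α) : RAntim I (char a) a epsilon epsilon
  | plusL {E F : RegularExpression α} {a El Er} :
      RAntim I E a El Er → RAntim I (plus E F) a El Er
  | plusR {E F : RegularExpression α} {a Fl Fr} :
      RAntim I F a Fl Fr → RAntim I (plus E F) a Fl Fr
  | compL {E F : RegularExpression α} {a El Er} :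
      RAntim I E a El Er → RAntim I (comp E F) a El (comp Er F)
  | compR {E F : RegularExpression α} {a Fl Fr} :
      RAntim I F a Fl Fr → RAntim I (comp E F) a (comp (Rexp I a E) Fl) Fr
  | st {E : RegularExpression α} {a El Er} :
      RAntim I E a El Er →
      RAntim I (star E) a (comp (star (Rexp I a E)) El) (comp Er (star E))

/-- Refined Antimirov relation lifted to nonempty lists of regexps (unbounded). -/
inductive RAntimL (I : α → α → Prop) :
    List (RegularExpression α) → α → List (RegularExpression α) → Prop
  | split {Γ Δ : List (RegularExpression α)} {E : RegularExpression α} {a El Er} :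
      RAntim I E a El Er →
      RAntimL I (Γ ++ E :: Δ) a (Γ.map (Rexp I a) ++ El :: Er :: Δ)
  | dropL {Γ Δ : List (RegularExpression α)} {E : RegularExpression α} {a El Er} :
      RAntim I E a El Er → [] ∈ El.matches' → Γ ≠ [] →
      RAntimL I (Γ ++ E :: Δ) a (Γ.map (Rexp I a) ++ Er :: Δ)
  | dropR {Γ Δ : List (RegularExpression α)} {E : RegularExpression α} {a El Er} :
      RAntim I E a El Er → [] ∈ Er.matches' → Δ ≠ [] →
      RAntimL I (Γ ++ E :: Δ) a (Γ.map (Rexp I a) ++ El :: Δ)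
  | dropBoth {Γ Δ : List (RegularExpression α)} {E : RegularExpression α} {a El Er} :
      RAntim I E a El Er → [] ∈ El.matches' → [] ∈ Er.matches' → Γ ≠ [] → Δ ≠ [] →
      RAntimL I (Γ ++ E :: Δ) a (Γ.map (Rexp I a) ++ Δ)

/-- Refined Antimirov relation along a word (unbounded). -/
inductive RAntimW (I : α → α → Prop) :
    RegularExpression α → List α → List (RegularExpression α) → Prop
  | nil (E : RegularExpression α) : RAntimW I E [] [E]
  | snoc {E : RegularExpression α} {u Γ a Γ'} :
      RAntimW I E u Γ → RAntimL I Γ a Γ' → RAntimW I E (u ++ [a]) Γ'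

/-- N-bounded refined Antimirov relation lifted to nonempty lists of regexps. -/
inductive RAntimLN (I : α → α → Prop) (N : ℕ) :
    List (RegularExpression α) → α → List (RegularExpression α) → Prop
  | split {Γ Δ : List (RegularExpression α)} {E : RegularExpression α} {a El Er} :
      RAntim I E a El Er → Γ.length + Δ.length < N →
      RAntimLN I N (Γ ++ E :: Δ) a (Γ.map (Rexp I a) ++ El :: Er :: Δ)
  | dropL {Γ Δ : List (RegularExpression α)} {E : RegularExpression α} {a El Er} :
      RAntim I E a El Er → [] ∈ El.matches' → Γ ≠ [] →
      RAntimLN I N (Γ ++ E :: Δ) a (Γ.map (Rexp I a) ++ Er :: Δ)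
  | dropR {Γ Δ : List (RegularExpression α)} {E : RegularExpression α} {a El Er} :
      RAntim I E a El Er → [] ∈ Er.matches' → Δ ≠ [] →
      RAntimLN I N (Γ ++ E :: Δ) a (Γ.map (Rexp I a) ++ El :: Δ)
  | dropBoth {Γ Δ : List (RegularExpression α)} {E : RegularExpression α} {a El Er} :
      RAntim I E a El Er → [] ∈ El.matches' → [] ∈ Er.matches' → Γ ≠ [] → Δ ≠ [] →
      RAntimLN I N (Γ ++ E :: Δ) a (Γ.map (Rexp I a) ++ Δ)

/-- N-bounded refined Antimirov relation along a word. -/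
inductive RAntimWN (I : α → α → Prop) (N : ℕ) :
    RegularExpression α → List α → List (RegularExpression α) → Prop
  | nil (E : RegularExpression α) : RAntimWN I N E [] [E]
  | snoc {E : RegularExpression α} {u Γ a Γ'} :
      RAntimWN I N E u Γ → RAntimLN I N Γ a Γ' → RAntimWN I N E (u ++ [a]) Γ'

/-!
Both sides are read through `ReorderConcat I u v z`: `z` is a shuffle of `u` and `v` in which
every letter of `v` is independent of the letters of `u` it overtakes. This is `u ⊲ z ⊳ v` with
the blocks taken letter by letter, and commuting the overtaken letters back shows `u ++ v ∼ z`.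
Conversely `u ++ v` is such a shuffle of `u` and `v`, and the words `z` with `u ∼⊲ z ⊳∼ v` are
closed under a swap of adjacent independent letters: a swap inside `u` or inside `v` is absorbed
by `∼` on that side, and a swap of a letter of `u` with a letter of `v` only changes which of the
two overtakes the other, which symmetry of `I` allows.
-/

namespace TrEq

variable {I : α → α → Prop}

theorem append_left {v v' : List α} (h : TrEq I v v') (u : List α) :
    TrEq I (u ++ v) (u ++ v') := by
  induction h with
  | swap x y hab => simpa using TrEq.swap (u ++ x) y hab
  | refl => exact .refl _
  | symm _ ih => exact ih.symm
  | trans _ _ ih₁ ih₂ => exact ih₁.trans ih₂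

theorem append_right {u u' : List α} (h : TrEq I u u') (v : List α) :
    TrEq I (u ++ v) (u' ++ v) := by
  induction h with
  | swap x y hab => simpa using TrEq.swap x (y ++ v) hab
  | refl => exact .refl _
  | symm _ ih => exact ih.symm
  | trans _ _ ih₁ ih₂ => exact ih₁.trans ih₂

theorem cons {v v' : List α} (h : TrEq I v v') (a : α) : TrEq I (a :: v) (a :: v') :=
  h.append_left [a]

theorem swap_cons {a b : α} (hab : I a b) (l : List α) : TrEq I (a :: b :: l) (b :: a :: l) :=
  TrEq.swap [] l hab

theorem perm {u v : List α} (h : TrEq I u v) : u.Perm v := by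
  induction h with
  | swap x y _ => simpa using ((List.Perm.swap _ _ y).append_left x)
  | refl => exact .refl _
  | symm _ ih => exact ih.symm
  | trans _ _ ih₁ ih₂ => exact ih₁.trans ih₂

theorem append_cons_of_forall {b : α} {u : List α} (hb : ∀ c ∈ u, I b c) (w : List α) :
    TrEq I (u ++ b :: w) (b :: (u ++ w)) := by
  induction u with
  | nil => exact .refl _
  | cons c u ih =>
    have hu : ∀ d ∈ u, I b d := fun d hd => hb d (List.mem_cons_of_mem c hd)
    exact ((ih hu).cons c).trans (swap_cons (hb c List.mem_cons_self) _).symm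

end TrEq

inductive ReorderConcat (I : α → α → Prop) : List α → List α → List α → Prop
  | nil : ReorderConcat I [] [] []
  | cons_left {u v z : List α} (a : α) : ReorderConcat I u v z → ReorderConcat I (a :: u) v (a :: z)
  | cons_right {u v z : List α} {b : α} :
      (∀ c ∈ u, I b c) → ReorderConcat I u v z → ReorderConcat I u (b :: v) (b :: z)

namespace ReorderConcat

variable {I : α → α → Prop}

theorem nil_left (v : List α) : ReorderConcat I [] v v := by
  induction v with
  | nil => exact .nil
  | cons b v ih => exact ih.cons_right (by simp)

theorem append_self (u v : List α) : ReorderConcat I u v (u ++ v) := by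
  induction u with
  | nil => exact nil_left v
  | cons a u ih => exact ih.cons_left a

theorem append_left {u v z : List α} (h : ReorderConcat I u v z) (w : List α) :
    ReorderConcat I (w ++ u) v (w ++ z) := by
  induction w with
  | nil => exact h
  | cons a w ih => exact ih.cons_left a

theorem append_right {u v z w : List α} (hw : WIndep I w u) (h : ReorderConcat I u v z) :
    ReorderConcat I u (w ++ v) (w ++ z) := by
  induction w with
  | nil => exact h
  | cons b w ih =>
    exact (ih fun c hc => hw c (List.mem_cons_of_mem b hc)).cons_right (hw b List.mem_cons_self)

theorem trEq {u v z : List α} (h : ReorderConcat I u v z) : TrEq I (u ++ v) z := by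
  induction h with
  | nil => exact .refl _
  | cons_left a _ ih => exact ih.cons a
  | @cons_right u v z b hb _ ih => exact (TrEq.append_cons_of_forall hb v).trans (ih.cons b)

theorem swap (hsym : Symmetric I) {a b : α} (hab : I a b) {x u v y : List α}
    (h : ReorderConcat I u v (x ++ a :: b :: y)) :
    ∃ u' v', TrEq I u u' ∧ TrEq I v v' ∧ ReorderConcat I u' v' (x ++ b :: a :: y) := by
  induction x generalizing u v with
  | nil =>
    cases h with
    | cons_left _ h =>
      cases h with
      | cons_left _ h => exact ⟨_, _, .swap_cons hab _, .refl _, (h.cons_left a).cons_left b⟩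
      | cons_right hb h =>
        refine ⟨_, _, .refl _, .refl _, (h.cons_left a).cons_right ?_⟩
        simpa [hsym hab] using hb
    | cons_right ha h =>
      cases h with
      | cons_left _ h =>
        refine ⟨_, _, .refl _, .refl _, (h.cons_right ?_).cons_left b⟩
        exact fun c hc => ha c (List.mem_cons_of_mem b hc)
      | cons_right hb h => exact ⟨_, _, .refl _, .swap_cons hab _, (h.cons_right ha).cons_right hb⟩
  | cons c x ih =>
    cases h with
    | cons_left _ h =>
      obtain ⟨u', v', hu, hv, h'⟩ := ih h
      exact ⟨_, _, hu.cons c, hv, h'.cons_left c⟩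
    | cons_right hc h =>
      obtain ⟨u', v', hu, hv, h'⟩ := ih h
      exact ⟨_, _, hu, hv.cons c, h'.cons_right fun d hd => hc d (hu.perm.mem_iff.2 hd)⟩

end ReorderConcat

theorem List.flatten_map_range_succ (f : ℕ → List α) (n : ℕ) :
    ((List.range (n + 1)).map f).flatten =
      f 0 ++ ((List.range n).map fun i => f (i + 1)).flatten := by
  simp [List.range_succ_eq_map, Function.comp_def]

theorem List.mem_flatten_map_range {f : ℕ → List α} {n : ℕ} {c : α} :
    c ∈ ((List.range n).map f).flatten ↔ ∃ i < n, c ∈ f i := by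
  simp [List.mem_flatten]

structure ScatWitness (I : α → α → Prop) (n : ℕ) (us vs : ℕ → List α) (u z v : List α) : Prop where
  left_ne_nil : ∀ i, 1 ≤ i → i ≤ n → us i ≠ []
  right_ne_nil : ∀ j, 1 ≤ j → j ≤ n - 1 → vs j ≠ []
  left_eq : u = ((List.range n).map fun i => us (i + 1)).flatten
  right_eq : v = ((List.range (n + 1)).map vs).flatten
  eq : z = vs 0 ++ ((List.range n).map fun i => us (i + 1) ++ vs (i + 1)).flatten
  indep : ∀ i j, 1 ≤ i → i ≤ n → j < i → WIndep I (vs j) (us i)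

section Scattering

variable {I : α → α → Prop}

theorem scat_iff_exists_scatWitness {u z v : List α} :
    Scat I u z v ↔ ∃ n us vs, ScatWitness I n us vs u z v :=
  ⟨fun ⟨n, us, vs, h₁, h₂, h₃, h₄, h₅, h₆⟩ => ⟨n, us, vs, h₁, h₂, h₃, h₄, h₅, h₆⟩,
    fun ⟨n, us, vs, h⟩ => ⟨n, us, vs, h.1, h.2, h.3, h.4, h.5, h.6⟩⟩

theorem scatWitness_zero (v : List α) : ScatWitness I 0 (fun _ => []) (fun _ => v) [] v v where
  left_ne_nil i h₁ h₂ := by omega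
  right_ne_nil j h₁ h₂ := by omega
  left_eq := by simp
  right_eq := by simp
  eq := by simp
  indep i j h₁ h₂ := by omega

namespace ScatWitness

variable {n : ℕ} {us vs : ℕ → List α} {u z v : List α}

theorem mem_left (h : ScatWitness I n us vs u z v) {i : ℕ} (hi₁ : 1 ≤ i) (hi₂ : i ≤ n) {c : α}
    (hc : c ∈ us i) : c ∈ u := by
  rw [h.left_eq, List.mem_flatten_map_range]
  exact ⟨i - 1, by omega, by rwa [Nat.sub_add_cancel hi₁]⟩

theorem cons_right (h : ScatWitness I n us vs u z v) {b : α} (hb : ∀ c ∈ u, I b c) :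
    ScatWitness I n us (Function.update vs 0 (b :: vs 0)) u (b :: z) (b :: v) where
  left_ne_nil := h.left_ne_nil
  right_ne_nil j h₁ h₂ := by
    simpa [Function.update_of_ne (show j ≠ 0 by omega)] using h.right_ne_nil j h₁ h₂
  left_eq := h.left_eq
  right_eq := by simp [List.flatten_map_range_succ, h.right_eq]
  eq := by simp [h.eq]
  indep i j h₁ h₂ hj := by
    rcases Nat.eq_zero_or_pos j with rfl | hj₀
    · simp only [Function.update_self]
      intro c hc d hd
      rcases List.mem_cons.1 hc with rfl | hc
      · exact hb d (h.mem_left h₁ h₂ hd)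
      · exact h.indep i 0 h₁ h₂ hj c hc d hd
    · simpa [Function.update_of_ne hj₀.ne'] using h.indep i j h₁ h₂ hj

theorem cons_left_of_eq_nil (h : ScatWitness I (n + 1) us vs u z v) (h₀ : vs 0 = []) (a : α) :
    ScatWitness I (n + 1) (Function.update us 1 (a :: us 1)) vs (a :: u) (a :: z) v where
  left_ne_nil i h₁ h₂ := by
    rcases eq_or_ne i 1 with rfl | hi
    · simp
    · simpa [Function.update_of_ne hi] using h.left_ne_nil i h₁ h₂
  right_ne_nil := h.right_ne_nil
  left_eq := by simp [List.flatten_map_range_succ, h.left_eq]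
  right_eq := h.right_eq
  eq := by simp [List.flatten_map_range_succ, h.eq, h₀]
  indep i j h₁ h₂ hj := by
    rcases eq_or_ne i 1 with rfl | hi
    · obtain rfl : j = 0 := by omega
      simp [h₀, WIndep]
    · simpa [Function.update_of_ne hi] using h.indep i j h₁ h₂ hj

theorem cons_left_new_block (h : ScatWitness I n us vs u z v) (h₀ : n = 0 ∨ vs 0 ≠ []) (a : α) :
    ScatWitness I (n + 1) (fun i => if i = 1 then [a] else us (i - 1))
      (fun j => if j = 0 then [] else vs (j - 1)) (a :: u) (a :: z) v where
  left_ne_nil i h₁ h₂ := by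
    rcases eq_or_ne i 1 with rfl | hi
    · simp
    · simpa [hi] using h.left_ne_nil (i - 1) (by omega) (by omega)
  right_ne_nil j h₁ h₂ := by
    rcases eq_or_ne j 1 with rfl | hj
    · simpa using h₀.resolve_left (by omega)
    · simpa [show j ≠ 0 by omega] using h.right_ne_nil (j - 1) (by omega) (by omega)
  left_eq := by simp [List.flatten_map_range_succ, h.left_eq]
  right_eq := by simp [List.flatten_map_range_succ, h.right_eq]
  eq := by simp [List.flatten_map_range_succ, h.eq]
  indep i j h₁ h₂ hj := by
    rcases Nat.eq_zero_or_pos j with rfl | hj₀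
    · simp [WIndep]
    · simpa [show i ≠ 1 by omega, hj₀.ne'] using
        h.indep (i - 1) (j - 1) (by omega) (by omega) (by omega)

theorem indep_left (h : ScatWitness I n us vs u z v) : WIndep I (vs 0) u := by
  intro c hc d hd
  rw [h.left_eq, List.mem_flatten_map_range] at hd
  obtain ⟨i, hi, hd⟩ := hd
  exact h.indep (i + 1) 0 (by omega) (by omega) (by omega) c hc d hd

theorem tail (h : ScatWitness I (n + 1) us vs u z v) :
    ScatWitness I n (fun i => us (i + 1)) (fun j => vs (j + 1))
      ((List.range n).map fun i => us (i + 2)).flatten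
      (vs 1 ++ ((List.range n).map fun i => us (i + 2) ++ vs (i + 2)).flatten)
      ((List.range (n + 1)).map fun j => vs (j + 1)).flatten where
  left_ne_nil i h₁ h₂ := h.left_ne_nil (i + 1) (by omega) (by omega)
  right_ne_nil j h₁ h₂ := h.right_ne_nil (j + 1) (by omega) (by omega)
  left_eq := rfl
  right_eq := rfl
  eq := rfl
  indep i j h₁ h₂ hj := h.indep (i + 1) (j + 1) (by omega) (by omega) (by omega)

theorem reorderConcat (h : ScatWitness I n us vs u z v) : ReorderConcat I u v z := by
  induction n generalizing us vs u z v with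
  | zero =>
    rw [h.left_eq, h.right_eq, h.eq]
    simpa using ReorderConcat.nil_left (vs 0)
  | succ n ih =>
    have hu : u = us 1 ++ ((List.range n).map fun i => us (i + 2)).flatten := by
      rw [h.left_eq, List.flatten_map_range_succ]
    have hv : v = vs 0 ++ ((List.range (n + 1)).map fun j => vs (j + 1)).flatten := by
      rw [h.right_eq, List.flatten_map_range_succ]
    have hz : z = vs 0 ++ (us 1 ++ (vs 1 ++
        ((List.range n).map fun i => us (i + 2) ++ vs (i + 2)).flatten)) := by
      simp [h.eq, List.flatten_map_range_succ]
    rw [hu, hv, hz]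
    exact ((ih h.tail).append_left (us 1)).append_right (hu ▸ h.indep_left)

end ScatWitness

theorem ReorderConcat.scat {u v z : List α} (h : ReorderConcat I u v z) : Scat I u z v := by
  induction h with
  | nil => exact scat_iff_exists_scatWitness.2 ⟨0, _, _, scatWitness_zero []⟩
  | @cons_left u v z a _ ih =>
    obtain ⟨n, us, vs, h⟩ := scat_iff_exists_scatWitness.1 ih
    refine scat_iff_exists_scatWitness.2 ?_
    by_cases hn : n ≠ 0 ∧ vs 0 = []
    · obtain ⟨m, rfl⟩ := Nat.exists_eq_succ_of_ne_zero hn.1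
      exact ⟨_, _, _, h.cons_left_of_eq_nil hn.2 a⟩
    · exact ⟨_, _, _, h.cons_left_new_block (by tauto) a⟩
  | cons_right hb _ ih =>
    obtain ⟨n, us, vs, h⟩ := scat_iff_exists_scatWitness.1 ih
    exact scat_iff_exists_scatWitness.2 ⟨n, _, _, h.cons_right hb⟩

theorem scat_iff_reorderConcat {u z v : List α} : Scat I u z v ↔ ReorderConcat I u v z :=
  ⟨fun h => by
    obtain ⟨n, us, vs, h⟩ := scat_iff_exists_scatWitness.1 h
    exact h.reorderConcat, ReorderConcat.scat⟩

theorem eqScatEq_append (u v : List α) : EqScatEq I u (u ++ v) v :=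
  ⟨u, v, .refl u, scat_iff_reorderConcat.2 (.append_self u v), .refl v⟩

theorem eqScatEq_swap (hsym : Symmetric I) {a b : α} (hab : I a b) {u v x y : List α}
    (h : EqScatEq I u (x ++ [a, b] ++ y) v) : EqScatEq I u (x ++ [b, a] ++ y) v := by
  obtain ⟨u', v', hu, hs, hv⟩ := h
  obtain ⟨u'', v'', hu', hv', hs'⟩ :=
    (scat_iff_reorderConcat.1 (by simpa using hs)).swap hsym hab
  exact ⟨u'', v'', hu.trans hu', scat_iff_reorderConcat.2 (by simpa using hs'), hv'.symm.trans hv⟩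

theorem eqScatEq_congr_middle (hsym : Symmetric I) {u v z z' : List α} (h : TrEq I z z') :
    EqScatEq I u z v ↔ EqScatEq I u z' v := by
  induction h with
  | swap x y hab => exact ⟨eqScatEq_swap hsym hab, eqScatEq_swap hsym (hsym hab)⟩
  | refl => rfl
  | symm _ ih => exact ih.symm
  | trans _ _ ih₁ ih₂ => exact ih₁.trans ih₂

end Scattering

theorem stmt0 {α : Type u} (I : α → α → Prop)
    (hsym : Symmetric I) (u v z : List α) :
    TrEq I (u ++ v) z ↔ EqScatEq I u z v := by
  constructor
  · intro h
    exact (eqScatEq_congr_middle hsym h).1 (eqScatEq_append u v)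
  · rintro ⟨u', v', hu, hs, hv⟩
    exact (hu.append_right v).trans <|
      (hv.symm.append_left u').trans (scat_iff_reorderConcat.1 hs).trEq
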